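/- arXiv:2011.07677 — 2 statements merged into one kernel-verified Lean document; each statement's English description precedes it below -/
import Mathlib

section
/- Under the two-stage randomized design, the estimator Ŷ(z,a) is unbiased for the population average potential outcome: for every treatment condition z ∈ {0,1} and every treatment assignment mechanism a ∈ {1,…,m}, E[Ŷ(z,a)] = Ȳ(z,a), where the expectation is over the two-stage randomization of (A, Z). -/
/-!
Condition on the first-stage assignment `A`. Given `A`, the treated sets of the clusters are
independent and uniform, so for a cluster with `A j = a` the conditional mean of `Ŷ_j(z)` is the
average, over uniformly random `n_{j1}(a)`-subsets (`z = 1`) or their complements (`z = 0`), of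
the subset mean; every unit lies in equally many such subsets, so this is `Ȳ_j(z,a)`. For the
first stage, precomposing with a transposition of clusters preserves the admissible
assignments, so every cluster receives `a` with the same probability, which double counting
identifies as `J_a / J`. Hence `E[Σ_{A_j = a} Ȳ_j(z,a)] = J_a Ȳ(z,a)`.
-/

open scoped BigOperators

noncomputable section

/-- A two-stage randomized design: `J` clusters, the `j`-th of size `n j`,
`m` treatment assignment mechanisms, `Jc a` clusters assigned to mechanism `a`,
`n1 j a` treated units in cluster `j` under mechanism `a`, and fixed potential
outcomes `Y j i z a` (with `z : Bool`, `true` = treatment). -/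
structure TwoStageDesign where
  J : ℕ
  m : ℕ
  n : Fin J → ℕ
  Jc : Fin m → ℕ
  n1 : Fin J → Fin m → ℕ
  Y : (j : Fin J) → Fin (n j) → Bool → Fin m → ℝ

namespace TwoStageDesign

variable (d : TwoStageDesign)

/-- The number of units in cluster `j` assigned to condition `z` under mechanism `a`. -/
def nz (z : Bool) (j : Fin d.J) (a : Fin d.m) : ℕ :=
  if z then d.n1 j a else d.n j - d.n1 j a

/-- Admissible first-stage assignments: mechanism `a` is given to exactly `Jc a` clusters. -/
def mechA : Finset (Fin d.J → Fin d.m) :=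
  Finset.univ.filter fun A => ∀ a, (Finset.univ.filter fun j => A j = a).card = d.Jc a

/-- Admissible second-stage assignments given the first stage `A`: the treated set in
cluster `j` has exactly `n1 j (A j)` units. -/
def treatA (A : Fin d.J → Fin d.m) : Finset ((j : Fin d.J) → Finset (Fin (d.n j))) :=
  Finset.univ.filter fun S => ∀ j, (S j).card = d.n1 j (A j)

/-- Expectation with respect to the two-stage randomization: `A` is uniform on the
admissible first-stage assignments and, given `A`, the treated sets are uniform on the
admissible second-stage assignments (independently across clusters). -/
def expec (f : (Fin d.J → Fin d.m) → ((j : Fin d.J) → Finset (Fin (d.n j))) → ℝ) : ℝ :=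
  ∑ A ∈ d.mechA, ∑ S ∈ d.treatA A,
    f A S / ((d.mechA.card : ℝ) * ((d.treatA A).card : ℝ))

/-- Covariance under the two-stage randomization. -/
def cov (f g : (Fin d.J → Fin d.m) → ((j : Fin d.J) → Finset (Fin (d.n j))) → ℝ) : ℝ :=
  d.expec fun A S => (f A S - d.expec f) * (g A S - d.expec g)

/-- Variance under the two-stage randomization. -/
def var (f : (Fin d.J → Fin d.m) → ((j : Fin d.J) → Finset (Fin (d.n j))) → ℝ) : ℝ :=
  d.cov f f

/-- Observed outcome of unit `i` in cluster `j`: `Y_{ij} = Y_{ij}(Z_{ij}, A_j)`. -/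
def Yobs (A : Fin d.J → Fin d.m) (S : (j : Fin d.J) → Finset (Fin (d.n j)))
    (j : Fin d.J) (i : Fin (d.n j)) : ℝ :=
  d.Y j i (decide (i ∈ S j)) (A j)

/-- `Ŷ_j(z)`: average observed outcome among units of cluster `j` with `Z_{ij} = z`. -/
def hatYj (A : Fin d.J → Fin d.m) (S : (j : Fin d.J) → Finset (Fin (d.n j)))
    (z : Bool) (j : Fin d.J) : ℝ :=
  (∑ i ∈ Finset.univ.filter (fun i => decide (i ∈ S j) = z), d.Yobs A S j i) /
    ((Finset.univ.filter (fun i : Fin (d.n j) => decide (i ∈ S j) = z)).card : ℝ)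

/-- `Ŷ(z,a)`: average of `Ŷ_j(z)` over clusters with `A_j = a`. -/
def hatY (A : Fin d.J → Fin d.m) (S : (j : Fin d.J) → Finset (Fin (d.n j)))
    (z : Bool) (a : Fin d.m) : ℝ :=
  (∑ j ∈ Finset.univ.filter (fun j => A j = a), d.hatYj A S z j) / (d.Jc a : ℝ)

/-- `Ȳ_j(z,a)`: cluster-level average potential outcome. -/
def Ybarj (j : Fin d.J) (z : Bool) (a : Fin d.m) : ℝ :=
  (∑ i, d.Y j i z a) / (d.n j : ℝ)

/-- `Ȳ(z,a)`: population-level average potential outcome. -/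
def Ybar (z : Bool) (a : Fin d.m) : ℝ :=
  (∑ j, d.Ybarj j z a) / (d.J : ℝ)

end TwoStageDesign

open Finset

namespace Finset

variable {ι K : Type*} [Field K] [CharZero K]

theorem expect_powersetCard_expect {s : Finset ι} {t : ℕ} (ht₀ : 0 < t) (hts : t ≤ #s)
    (f : ι → K) : 𝔼 T ∈ s.powersetCard t, 𝔼 i ∈ T, f i = 𝔼 i ∈ s, f i := by
  classical
  have hcount : ∀ i ∈ s, #{T ∈ s.powersetCard t | i ∈ T} = (#s - 1).choose (t - 1) := by
    intro i hi
    simpa using card_filter_powersetCard_subset {i} s t (singleton_subset_iff.2 hi) ht₀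
  have hdouble : ∑ T ∈ s.powersetCard t, ∑ i ∈ T, f i
      = ((#s - 1).choose (t - 1) : K) * ∑ i ∈ s, f i := by
    rw [sum_comm' (t' := s) (s' := fun i => {T ∈ s.powersetCard t | i ∈ T})
      (fun T i => by simp only [mem_filter, mem_powersetCard]; grind), mul_sum]
    refine sum_congr rfl fun i hi => ?_
    rw [sum_const, hcount i hi, nsmul_eq_mul]
  have hchoose : (#s : K) * ((#s - 1).choose (t - 1) : K) = t * ((#s).choose t : K) := by
    obtain ⟨n, hn⟩ : ∃ n, #s = n + 1 := ⟨#s - 1, by omega⟩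
    obtain ⟨k, rfl⟩ : ∃ k, t = k + 1 := ⟨t - 1, by omega⟩
    rw [hn, Nat.add_sub_cancel, Nat.add_sub_cancel]
    exact_mod_cast (Nat.add_one_mul_choose_eq n k).trans (mul_comm _ _)
  have hs : (#s : K) ≠ 0 := by exact_mod_cast (ht₀.trans_le hts).ne'
  have ht : (t : K) ≠ 0 := by exact_mod_cast ht₀.ne'
  have hC : ((#s).choose t : K) ≠ 0 := by exact_mod_cast (Nat.choose_pos hts).ne'
  rw [expect_congr rfl fun T hT => by rw [expect_eq_sum_div_card, (mem_powersetCard.1 hT).2],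
    expect_eq_sum_div_card, ← sum_div, hdouble, card_powersetCard, expect_eq_sum_div_card]
  field_simp
  linear_combination (∑ i ∈ s, f i) * hchoose

theorem expect_powersetCard_expect_compl [Fintype ι] [DecidableEq ι] {t : ℕ}
    (ht : t < Fintype.card ι) (f : ι → K) :
    𝔼 T ∈ (univ : Finset ι).powersetCard t, 𝔼 i ∈ Tᶜ, f i = 𝔼 i, f i := by
  rw [← expect_powersetCard_expect (s := univ) (t := Fintype.card ι - t) (by omega)
    (by simp) f]
  refine expect_nbij' compl compl (fun T hT => ?_) (fun T hT => ?_) (fun T _ => compl_compl T)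
    (fun T _ => compl_compl T) fun _ _ => rfl
  · rw [mem_powersetCard_univ] at hT ⊢
    rw [card_compl, hT]
  · rw [mem_powersetCard_univ] at hT ⊢
    rw [card_compl, hT]
    omega

theorem expect_powersetCard_expect_filter_decide [Fintype ι] [DecidableEq ι] {t : ℕ}
    (ht₀ : 0 < t) (ht : t < Fintype.card ι) (z : Bool) (f : ι → K) :
    𝔼 T ∈ (univ : Finset ι).powersetCard t, 𝔼 i ∈ univ.filter (fun i => decide (i ∈ T) = z), f i
      = 𝔼 i, f i := by
  cases z
  · have hcompl (T : Finset ι) : univ.filter (fun i => decide (i ∈ T) = false) = Tᶜ := by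
      ext; simp
    simpa only [hcompl] using expect_powersetCard_expect_compl ht f
  · simpa only [decide_eq_true_eq, subset_univ, filter_mem_eq_of_subset]
      using expect_powersetCard_expect (s := univ) ht₀ (by simpa using ht.le) f

end Finset

namespace Fintype

variable {ι K : Type*} [Field K] [CharZero K] [DecidableEq ι] [Fintype ι] {α : ι → Type*}

theorem expect_piFinset_apply {t : ∀ i, Finset (α i)} (ht : ∀ i, (t i).Nonempty) (j : ι)
    (g : α j → K) : 𝔼 S ∈ piFinset t, g (S j) = 𝔼 T ∈ t j, g T := by
  classical
  have hfiber :
      ∑ S ∈ piFinset t, g (S j) = (∏ k ∈ univ.erase j, (#(t k) : K)) * ∑ T ∈ t j, g T := by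
    rw [← sum_fiberwise_of_maps_to (g := fun S => S j) fun S hS => mem_piFinset.1 hS j, mul_sum]
    refine Finset.sum_congr rfl fun T hT => ?_
    rw [Finset.sum_congr rfl fun S hS => by rw [(mem_filter.1 hS).2], sum_const,
      card_filter_piFinset_eq_of_mem t j hT, nsmul_eq_mul]
    push_cast
    rfl
  have hprod : (∏ k ∈ univ.erase j, (#(t k) : K)) ≠ 0 :=
    prod_ne_zero_iff.2 fun k _ => by exact_mod_cast (ht k).card_pos.ne'
  rw [Finset.expect_eq_sum_div_card, Finset.expect_eq_sum_div_card, hfiber, card_piFinset,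
    Nat.cast_prod, ← mul_prod_erase univ _ (mem_univ j)]
  field_simp

end Fintype

section AssignmentsWithCounts

variable {ι β : Type*} [Fintype ι] [DecidableEq ι] [Fintype β] [DecidableEq β]

variable (ι) in
def assignmentsWithCounts (c : β → ℕ) : Finset (ι → β) :=
  {A | ∀ b, #{i | A i = b} = c b}

variable {c : β → ℕ}

theorem mem_assignmentsWithCounts {A : ι → β} :
    A ∈ assignmentsWithCounts ι c ↔ ∀ b, #{i | A i = b} = c b := by
  simp [assignmentsWithCounts]

theorem comp_perm_mem_assignmentsWithCounts {A : ι → β} (hA : A ∈ assignmentsWithCounts ι c)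
    (σ : Equiv.Perm ι) : A ∘ σ ∈ assignmentsWithCounts ι c := by
  rw [mem_assignmentsWithCounts] at hA ⊢
  intro b
  rw [← hA b]
  exact card_equiv σ (by simp)

theorem card_filter_apply_assignmentsWithCounts_eq (j j' : ι) (b : β) :
    #{A ∈ assignmentsWithCounts ι c | A j = b}
      = #{A ∈ assignmentsWithCounts ι c | A j' = b} := by
  have hswap (A : ι → β) : A ∘ Equiv.swap j j' ∘ Equiv.swap j j' = A := by ext; simp
  refine card_nbij' (· ∘ Equiv.swap j j') (· ∘ Equiv.swap j j') (fun A hA => ?_)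
    (fun A hA => ?_) (fun A _ => hswap A) (fun A _ => hswap A)
  all_goals
    rw [mem_coe, mem_filter] at hA ⊢
    exact ⟨comp_perm_mem_assignmentsWithCounts hA.1 _, by simpa using hA.2⟩

theorem sum_card_filter_apply_assignmentsWithCounts (b : β) :
    ∑ j : ι, #{A ∈ assignmentsWithCounts ι c | A j = b}
      = #(assignmentsWithCounts ι c) * c b := by
  have hcount : ∀ A ∈ assignmentsWithCounts ι c, ∑ j, (if A j = b then 1 else 0) = c b :=
    fun A hA => by rw [← card_filter, mem_assignmentsWithCounts.1 hA b]
  simp_rw [card_filter]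
  rw [sum_comm, sum_congr rfl hcount, sum_const, smul_eq_mul]

theorem assignmentsWithCounts_nonempty (hc : ∑ b, c b = Fintype.card ι) :
    (assignmentsWithCounts ι c).Nonempty := by
  let e : ι ≃ Σ b, Fin (c b) := Fintype.equivOfCardEq (by simp [hc])
  refine ⟨fun i => (e i).1, mem_assignmentsWithCounts.2 fun b => ?_⟩
  rw [card_equiv e (t := {x | x.1 = b}) (by simp), ← Fintype.card_subtype,
    Fintype.card_congr (Equiv.sigmaSubtype b), Fintype.card_fin]

theorem card_filter_apply_assignmentsWithCounts_mul_card (j : ι) (b : β) :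
    #{A ∈ assignmentsWithCounts ι c | A j = b} * Fintype.card ι
      = #(assignmentsWithCounts ι c) * c b :=
  calc #{A ∈ assignmentsWithCounts ι c | A j = b} * Fintype.card ι
      = ∑ j' : ι, #{A ∈ assignmentsWithCounts ι c | A j' = b} := by
        rw [Finset.sum_congr rfl fun j' _ => card_filter_apply_assignmentsWithCounts_eq j' j b,
          sum_const, card_univ, smul_eq_mul, mul_comm]
    _ = #(assignmentsWithCounts ι c) * c b := sum_card_filter_apply_assignmentsWithCounts b

theorem expect_assignmentsWithCounts_sum_filter_apply {K : Type*} [Field K] [CharZero K]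
    (hc : ∑ b, c b = Fintype.card ι) (b : β) (x : ι → K) :
    𝔼 A ∈ assignmentsWithCounts ι c, ∑ j ∈ univ.filter (fun j => A j = b), x j
      = c b / Fintype.card ι * ∑ j, x j := by
  set S := assignmentsWithCounts ι c
  have hS : (#S : K) ≠ 0 := by exact_mod_cast (assignmentsWithCounts_nonempty hc).card_ne_zero
  have hfreq (j : ι) : (#{A ∈ S | A j = b} : K) = #S * c b / Fintype.card ι := by
    have : Nonempty ι := ⟨j⟩
    have hι : (Fintype.card ι : K) ≠ 0 := by exact_mod_cast Fintype.card_ne_zero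
    rw [eq_div_iff hι]
    exact_mod_cast card_filter_apply_assignmentsWithCounts_mul_card j b
  have hexchange : ∑ A ∈ S, ∑ j ∈ univ.filter (fun j => A j = b), x j
      = ∑ j, (#{A ∈ S | A j = b} : K) * x j := by
    simp_rw [sum_filter]
    rw [sum_comm]
    refine Finset.sum_congr rfl fun j _ => ?_
    rw [← sum_filter, sum_const, nsmul_eq_mul]
  rw [expect_eq_sum_div_card, hexchange, Finset.sum_congr rfl fun j _ => by rw [hfreq j], mul_sum,
    sum_div]
  refine Finset.sum_congr rfl fun j _ => ?_
  field_simp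

end AssignmentsWithCounts

namespace TwoStageDesign

variable (d : TwoStageDesign)

theorem mechA_eq : d.mechA = assignmentsWithCounts (Fin d.J) d.Jc := by
  ext A
  simp [mechA, mem_assignmentsWithCounts]

theorem treatA_eq_piFinset (A : Fin d.J → Fin d.m) :
    d.treatA A = Fintype.piFinset fun j => univ.powersetCard (d.n1 j (A j)) := by
  ext S
  simp [treatA]

theorem expec_eq_expect (f : (Fin d.J → Fin d.m) → ((j : Fin d.J) → Finset (Fin (d.n j))) → ℝ) :
    d.expec f = 𝔼 A ∈ d.mechA, 𝔼 S ∈ d.treatA A, f A S := by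
  simp only [expec, expect_eq_sum_div_card, sum_div, div_div, mul_comm]

theorem hatYj_eq_expect (A : Fin d.J → Fin d.m) (S : (j : Fin d.J) → Finset (Fin (d.n j)))
    (z : Bool) (j : Fin d.J) :
    d.hatYj A S z j = 𝔼 i ∈ univ.filter (fun i => decide (i ∈ S j) = z), d.Y j i z (A j) := by
  rw [hatYj, expect_eq_sum_div_card]
  congr 1
  refine Finset.sum_congr rfl fun i hi => ?_
  rw [Yobs, (mem_filter.1 hi).2]

theorem Ybarj_eq_expect (j : Fin d.J) (z : Bool) (a : Fin d.m) :
    d.Ybarj j z a = 𝔼 i, d.Y j i z a := by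
  rw [Ybarj, Fintype.expect_eq_sum_div_card, Fintype.card_fin]

theorem expect_hatYj {A : Fin d.J → Fin d.m} (hlo : ∀ j, 1 ≤ d.n1 j (A j))
    (hhi : ∀ j, d.n1 j (A j) < d.n j) (z : Bool) (j : Fin d.J) :
    𝔼 S ∈ d.treatA A, d.hatYj A S z j = d.Ybarj j z (A j) := by
  have hne (k : Fin d.J) :
      ((univ : Finset (Fin (d.n k))).powersetCard (d.n1 k (A k))).Nonempty :=
    powersetCard_nonempty.2 (by simpa using (hhi k).le)
  simp only [treatA_eq_piFinset, hatYj_eq_expect, Ybarj_eq_expect]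
  rw [Fintype.expect_piFinset_apply hne j
    (fun T => 𝔼 i ∈ univ.filter (fun i => decide (i ∈ T) = z), d.Y j i z (A j))]
  exact expect_powersetCard_expect_filter_decide (hlo j) (by simpa using hhi j) z _

end TwoStageDesign

theorem hatY_unbiased_general (d : TwoStageDesign)
    (hJc : ∀ a, 1 ≤ d.Jc a) (hJsum : ∑ a, d.Jc a = d.J)
    (hn1lo : ∀ j a, 1 ≤ d.n1 j a) (hn1hi : ∀ j a, d.n1 j a ≤ d.n j - 1)
    (z : Bool) (a : Fin d.m) :
    d.expec (fun A S => d.hatY A S z a) = d.Ybar z a := by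
  have hhi (j a) : d.n1 j a < d.n j := by have := hn1lo j a; have := hn1hi j a; omega
  have hJc0 : (d.Jc a : ℝ) ≠ 0 := by exact_mod_cast Nat.one_le_iff_ne_zero.1 (hJc a)
  calc d.expec (fun A S => d.hatY A S z a)
      = 𝔼 A ∈ d.mechA, (∑ j ∈ univ.filter (fun j => A j = a),
          𝔼 S ∈ d.treatA A, d.hatYj A S z j) / d.Jc a := by
        simp only [d.expec_eq_expect, TwoStageDesign.hatY, ← expect_div, expect_sum_comm]
    _ = 𝔼 A ∈ d.mechA, (∑ j ∈ univ.filter (fun j => A j = a), d.Ybarj j z a) / d.Jc a := by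
        refine expect_congr rfl fun A _ => ?_
        congr 1
        refine Finset.sum_congr rfl fun j hj => ?_
        rw [d.expect_hatYj (fun j => hn1lo j _) (fun j => hhi j _), (mem_filter.1 hj).2]
    _ = d.Ybar z a := by
        rw [← expect_div, d.mechA_eq, expect_assignmentsWithCounts_sum_filter_apply
          (by simpa using hJsum), Fintype.card_fin, TwoStageDesign.Ybar]
        field_simp

/-- **Unbiased estimation (Theorem 1, first part).** Under the two-stage randomized design,
for every treatment condition `z` and mechanism `a`, `E[Ŷ(z,a)] = Ȳ(z,a)`. -/
theorem hatY_unbiased (d : TwoStageDesign)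
    (hJ : 2 ≤ d.J) (hn : ∀ j, 2 ≤ d.n j)
    (hJc : ∀ a, 1 ≤ d.Jc a) (hJsum : ∑ a, d.Jc a = d.J)
    (hn1lo : ∀ j a, 1 ≤ d.n1 j a) (hn1hi : ∀ j a, d.n1 j a ≤ d.n j - 1)
    (z : Bool) (a : Fin d.m) :
    d.expec (fun A S => d.hatY A S z a) = d.Ybar z a :=
  hatY_unbiased_general d hJc hJsum hn1lo hn1hi z a
end
end

section
/- Exact variance of the two-stage design estimator under no interference: consider a two-stage randomized experiment with J ≥ 2 clusters of equal size n ≥ 2, m mechanisms with cluster counts J_1,…,J_m (Σ_a J_a = J), where under mechanism a exactly n p_a units per cluster are treated, with 0 < p_a < 1 and n p_a an integer in [1, n−1]. Suppose there is no interference: each unit has fixed real potential outcomes Y_{ij}(1), Y_{ij}(0) not depending on the mechanism, and the observed outcome is Y_{ij} = Y_{ij}(Z_{ij}). Then the difference-in-means estimator ÂTE = (1/J) Σ_{j=1}^J { (Σ_i Y_{ij} Z_{ij}) / n_{j1} − (Σ_i Y_{ij} (1 − Z_{ij})) / n_{j0} } (where n_{j1} = n p_{A_j} and n_{j0} = n −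 n_{j1}) has variance exactly equal to ((nJ−1)/(J³(n−1))) [ Σ_{a=1}^m (J_a/(n p_a)) η_w²(1) + Σ_{a=1}^m (J_a/(n(1−p_a))) η_w²(0) − (J/n) τ_w² ], where η_w²(z) = (1/(nJ−1)) Σ_j Σ_i {Y_{ij}(z) − Ȳ_j(z)}², τ_w² = (1/(nJ−1)) Σ_j Σ_i {ATE_{ij} − ATE_j}², ATE_{ij} = Y_{ij}(1) − Y_{ij}(0), Ȳ_j(z) = (1/n) Σ_i Y_{ij}(z), and ATE_j = (1/n) Σ_i ATE_{ij}. -/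
open scoped BigOperators

noncomputable section

namespace TwoStageNoInterference

/-- Admissible first-stage assignments: mechanism `a` is given to exactly `Jc a`
clusters. -/
def mechA (J m : ℕ) (Jc : Fin m → ℕ) : Finset (Fin J → Fin m) :=
  Finset.univ.filter fun A => ∀ a, (Finset.univ.filter fun j => A j = a).card = Jc a

/-- Admissible second-stage assignments given `A`: exactly `k (A j)` treated units in
cluster `j` (all clusters have the common size `N`). -/
def treatA (J m N : ℕ) (k : Fin m → ℕ) (A : Fin J → Fin m) :
    Finset (Fin J → Finset (Fin N)) :=
  Finset.univ.filter fun S => ∀ j, (S j).card = k (A j)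

/-- Expectation under the two-stage randomization: `A` uniform on the admissible
first-stage assignments; given `A`, the treated sets uniform (independently across
clusters) on the admissible second-stage assignments. -/
def expec (J m N : ℕ) (Jc : Fin m → ℕ) (k : Fin m → ℕ)
    (f : (Fin J → Fin m) → (Fin J → Finset (Fin N)) → ℝ) : ℝ :=
  ∑ A ∈ mechA J m Jc, ∑ S ∈ treatA J m N k A,
    f A S / (((mechA J m Jc).card : ℝ) * ((treatA J m N k A).card : ℝ))

/-- Variance under the two-stage randomization. -/
def variance (J m N : ℕ) (Jc : Fin m → ℕ) (k : Fin m → ℕ)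
    (f : (Fin J → Fin m) → (Fin J → Finset (Fin N)) → ℝ) : ℝ :=
  expec J m N Jc k fun A S => (f A S - expec J m N Jc k f) ^ 2

/-- `Ŷ_j(z)`: average observed outcome among units of cluster `j` assigned to `z`
(no interference: the potential outcomes `Y j i z` do not depend on the mechanism). -/
def hatYj (J N : ℕ) (Y : Fin J → Fin N → Bool → ℝ) (S : Fin J → Finset (Fin N))
    (z : Bool) (j : Fin J) : ℝ :=
  (∑ i ∈ Finset.univ.filter (fun i => decide (i ∈ S j) = z), Y j i (decide (i ∈ S j))) /
    ((Finset.univ.filter (fun i : Fin N => decide (i ∈ S j) = z)).card : ℝ)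

/-- The difference-in-means estimator `ÂTE`. -/
def ATEhat (J N : ℕ) (Y : Fin J → Fin N → Bool → ℝ) (S : Fin J → Finset (Fin N)) : ℝ :=
  (∑ j, (hatYj J N Y S true j - hatYj J N Y S false j)) / (J : ℝ)

/-- `Ȳ_j(z)`: cluster-level average potential outcome. -/
def Ybarj (J N : ℕ) (Y : Fin J → Fin N → Bool → ℝ) (j : Fin J) (z : Bool) : ℝ :=
  (∑ i, Y j i z) / (N : ℝ)

/-- `η_w²(z)`: within-cluster variance of the potential outcomes. -/
def etaw (J N : ℕ) (Y : Fin J → Fin N → Bool → ℝ) (z : Bool) : ℝ :=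
  (∑ j, ∑ i, (Y j i z - Ybarj J N Y j z) ^ 2) / ((N : ℝ) * (J : ℝ) - 1)

/-- `τ_w²`: within-cluster variance of the unit-level treatment effects. -/
def tauw (J N : ℕ) (Y : Fin J → Fin N → Bool → ℝ) : ℝ :=
  (∑ j, ∑ i,
      ((Y j i true - Y j i false) - (Ybarj J N Y j true - Ybarj J N Y j false)) ^ 2) /
    ((N : ℝ) * (J : ℝ) - 1)

end TwoStageNoInterference

/-!
Given the first-stage assignment `A`, the clusters are randomized independently, and in each
cluster the difference in means is unbiased for the cluster effect, with Neyman's variance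
`Vⱼ(k)` for complete randomization of `k = k (A j)` of the `N` units; it comes from the
inclusion probabilities `k / N` of one unit and `k (k - 1) / (N (N - 1))` of two units. Hence
the conditional mean of `ÂTE` given `A` is the same for all `A`, and the variance of `ÂTE` is
the average over `A` of the conditional variance `J⁻² ∑ⱼ Vⱼ(k (A j))`. The first stage is
exchangeable in the clusters, so cluster `j` receives mechanism `a` with probability
`J_a / J`; summing the `Vⱼ` over the clusters produces `η_w²` and `τ_w²`.
-/

open Finset

namespace TwoStageNoInterference

section SimpleRandomSampling

variable {ι : Type*} [Fintype ι] [DecidableEq ι] {k : ℕ}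

lemma choose_card_mul_card_filter_subset (s : Finset ι) :
    (Fintype.card ι).choose #s * #{T ∈ powersetCard k univ | s ⊆ T} =
      k.choose #s * (Fintype.card ι).choose k := by
  rcases le_or_gt #s k with hsk | hks
  · rw [card_filter_powersetCard_subset s univ k (subset_univ s) hsk, card_univ,
      ← Nat.choose_mul hsk, mul_comm]
  · have hempty : #{T ∈ powersetCard k univ | s ⊆ T} = 0 := by
      refine card_eq_zero.2 (filter_eq_empty_iff.2 fun T hT hsT => ?_)
      have := card_le_card hsT
      rw [(mem_powersetCard.1 hT).2] at this
      omega
    simp [hempty, Nat.choose_eq_zero_of_lt hks]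

lemma expect_indicator_subset (hk : k ≤ Fintype.card ι) (s : Finset ι) :
    𝔼 T ∈ powersetCard k univ, (if s ⊆ T then 1 else 0 : ℝ) =
      k.choose #s / (Fintype.card ι).choose #s := by
  have hNk : ((Fintype.card ι).choose k : ℝ) ≠ 0 := by exact_mod_cast (Nat.choose_pos hk).ne'
  have hNs : ((Fintype.card ι).choose #s : ℝ) ≠ 0 := by
    exact_mod_cast (Nat.choose_pos (card_le_univ s)).ne'
  rw [expect_eq_sum_div_card, sum_boole, card_powersetCard, card_univ, div_eq_div_iff hNk hNs,
    mul_comm]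
  exact_mod_cast choose_card_mul_card_filter_subset s

lemma expect_indicator_mem_and_mem (hk : k ≤ Fintype.card ι) (i j : ι) :
    𝔼 T ∈ powersetCard k univ, (if i ∈ T ∧ j ∈ T then 1 else 0 : ℝ) =
      if i = j then (k : ℝ) / Fintype.card ι
      else (k : ℝ) * (k - 1) / (Fintype.card ι * (Fintype.card ι - 1)) := by
  have hpair : ∀ T : Finset ι, i ∈ T ∧ j ∈ T ↔ {i, j} ⊆ T := by simp [insert_subset_iff]
  simp_rw [hpair, expect_indicator_subset hk]
  split_ifs with hij
  · subst hij; simp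
  · rw [card_pair hij, Nat.cast_choose_two, Nat.cast_choose_two,
      div_div_div_cancel_right₀ two_ne_zero]

lemma expect_sum_mem_powersetCard (hk : k ≤ Fintype.card ι) (f : ι → ℝ) :
    𝔼 T ∈ powersetCard k univ, ∑ i ∈ T, f i = (k : ℝ) / Fintype.card ι * ∑ i, f i := by
  have hind (i : ι) :
      𝔼 T ∈ powersetCard k univ, (if i ∈ T then 1 else 0 : ℝ) = (k : ℝ) / Fintype.card ι := by
    simpa using expect_indicator_subset hk {i}
  calc 𝔼 T ∈ powersetCard k univ, ∑ i ∈ T, f i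
      = 𝔼 T ∈ powersetCard k univ, ∑ i, f i * (if i ∈ T then 1 else 0) := by
        simp [mul_ite]
    _ = ∑ i, f i * ((k : ℝ) / Fintype.card ι) := by
        simp_rw [expect_sum_comm, ← mul_expect, hind]
    _ = _ := by rw [mul_sum]; simp_rw [mul_comm]

lemma expect_sq_sum_mem_powersetCard (hk : k ≤ Fintype.card ι) (hN : 2 ≤ Fintype.card ι)
    {w : ι → ℝ} (hw : ∑ i, w i = 0) :
    𝔼 T ∈ powersetCard k univ, (∑ i ∈ T, w i) ^ 2 =
      (k : ℝ) * (Fintype.card ι - k) / (Fintype.card ι * (Fintype.card ι - 1)) *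
        ∑ i, w i ^ 2 := by
  have hexpand (T : Finset ι) :
      (∑ i ∈ T, w i) ^ 2 = ∑ i, ∑ j, w i * w j * (if i ∈ T ∧ j ∈ T then 1 else 0) := by
    rw [← Fintype.sum_ite_mem, sq, sum_mul_sum]
    refine sum_congr rfl fun i _ => sum_congr rfl fun j _ => ?_
    by_cases hi : i ∈ T <;> by_cases hj : j ∈ T <;> simp [hi, hj]
  have hrow (a b : ℝ) (i : ι) :
      ∑ j, w i * w j * (if i = j then a else b) = (a - b) * w i ^ 2 := by
    have hsplit (j : ι) : w i * w j * (if i = j then a else b) =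
        b * w i * w j + if i = j then (a - b) * w i * w j else 0 := by
      split_ifs <;> ring
    simp only [hsplit, sum_add_distrib, ← mul_sum, hw, sum_ite_eq, mem_univ, if_true]
    ring
  have hN' : (2 : ℝ) ≤ Fintype.card ι := by exact_mod_cast hN
  have hN0 : (Fintype.card ι : ℝ) ≠ 0 := by positivity
  have hN1 : (Fintype.card ι : ℝ) - 1 ≠ 0 := by linarith
  simp_rw [hexpand, expect_sum_comm, ← mul_expect, expect_indicator_mem_and_mem hk, hrow,
    ← mul_sum]
  congr 1
  field_simp
  ring

end SimpleRandomSampling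

section DifferenceInMeans

variable {ι : Type*} [Fintype ι] {k : ℕ}

def sumSqDev (y : ι → ℝ) : ℝ := ∑ i, (y i - 𝔼 j, y j) ^ 2

lemma sum_sub_expect (y : ι → ℝ) : ∑ i, (y i - 𝔼 j, y j) = 0 := by
  rw [sum_sub_distrib, sum_const, card_univ, nsmul_eq_mul, Fintype.card_mul_expect, sub_self]

lemma sum_sub_expect_div_add_sub_expect_div (y₁ y₀ : ι → ℝ) (a b : ℝ) :
    ∑ i, ((y₁ i - 𝔼 j, y₁ j) / a + (y₀ i - 𝔼 j, y₀ j) / b) = 0 := by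
  rw [sum_add_distrib, ← sum_div, ← sum_div, sum_sub_expect, sum_sub_expect, zero_div, zero_div,
    add_zero]

variable [DecidableEq ι]

def diffInMeans (y₁ y₀ : ι → ℝ) (T : Finset ι) : ℝ :=
  (∑ i ∈ T, y₁ i) / #T - (∑ i ∈ Tᶜ, y₀ i) / #Tᶜ

lemma diffInMeans_sub_eq_sum (y₁ y₀ : ι → ℝ) {T : Finset ι} (hT : #T = k) (hk0 : 0 < k)
    (hkN : k < Fintype.card ι) :
    diffInMeans y₁ y₀ T - (𝔼 i, y₁ i - 𝔼 i, y₀ i) =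
      ∑ i ∈ T, ((y₁ i - 𝔼 j, y₁ j) / k + (y₀ i - 𝔼 j, y₀ j) / (Fintype.card ι - k)) := by
  have hTc : (#Tᶜ : ℝ) = Fintype.card ι - k := by
    rw [card_compl, hT, Nat.cast_sub hkN.le]
  have hsum₀ : ∑ i ∈ Tᶜ, y₀ i = (Fintype.card ι : ℝ) * 𝔼 i, y₀ i - ∑ i ∈ T, y₀ i := by
    rw [Fintype.card_mul_expect, ← sum_compl_add_sum T]
    ring
  have hk : (k : ℝ) ≠ 0 := Nat.cast_ne_zero.2 hk0.ne'
  have hNk : (Fintype.card ι : ℝ) - k ≠ 0 := by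
    rw [sub_ne_zero]; exact_mod_cast hkN.ne'
  rw [diffInMeans, hsum₀, hT, hTc, sum_add_distrib, ← sum_div, ← sum_div, sum_sub_distrib,
    sum_sub_distrib, sum_const, sum_const, hT, nsmul_eq_mul, nsmul_eq_mul]
  field_simp
  ring

lemma expect_diffInMeans (hk0 : 0 < k) (hkN : k < Fintype.card ι) (y₁ y₀ : ι → ℝ) :
    𝔼 T ∈ powersetCard k univ, diffInMeans y₁ y₀ T = 𝔼 i, y₁ i - 𝔼 i, y₀ i := by
  have hcentred :
      𝔼 T ∈ powersetCard k univ, (diffInMeans y₁ y₀ T - (𝔼 i, y₁ i - 𝔼 i, y₀ i)) = 0 := by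
    rw [expect_congr rfl fun T hT =>
        diffInMeans_sub_eq_sum y₁ y₀ (mem_powersetCard.1 hT).2 hk0 hkN,
      expect_sum_mem_powersetCard hkN.le, sum_sub_expect_div_add_sub_expect_div, mul_zero]
  rwa [expect_sub_distrib, expect_const (powersetCard_nonempty.2 (by simpa using hkN.le)),
    sub_eq_zero] at hcentred

def diffInMeansVar (k : ℕ) (y₁ y₀ : ι → ℝ) : ℝ :=
  (sumSqDev y₁ / k + sumSqDev y₀ / (Fintype.card ι - k) -
    sumSqDev (fun i => y₁ i - y₀ i) / Fintype.card ι) / (Fintype.card ι - 1)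

lemma expect_sq_diffInMeans_sub (hk0 : 0 < k) (hkN : k < Fintype.card ι) (y₁ y₀ : ι → ℝ) :
    𝔼 T ∈ powersetCard k univ, (diffInMeans y₁ y₀ T - (𝔼 i, y₁ i - 𝔼 i, y₀ i)) ^ 2 =
      diffInMeansVar k y₁ y₀ := by
  have hk : (k : ℝ) ≠ 0 := Nat.cast_ne_zero.2 hk0.ne'
  have hNk : (Fintype.card ι : ℝ) - k ≠ 0 := by
    rw [sub_ne_zero]; exact_mod_cast hkN.ne'
  have hN0 : (Fintype.card ι : ℝ) ≠ 0 := by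
    rw [Nat.cast_ne_zero]; omega
  have hN1 : (Fintype.card ι : ℝ) - 1 ≠ 0 := by
    rw [sub_ne_zero]; norm_cast; omega
  rw [expect_congr rfl fun T hT => by
      rw [diffInMeans_sub_eq_sum y₁ y₀ (mem_powersetCard.1 hT).2 hk0 hkN],
    expect_sq_sum_mem_powersetCard hkN.le (by omega)
      (sum_sub_expect_div_add_sub_expect_div y₁ y₀ _ _)]
  simp only [diffInMeansVar, sumSqDev, expect_sub_distrib]
  rw [mul_sum, sum_div, sum_div, sum_div, ← sum_add_distrib, ← sum_sub_distrib, sum_div]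
  refine sum_congr rfl fun i _ => ?_
  field_simp
  ring

end DifferenceInMeans

section Product

variable {ι κ : Type*} [Fintype ι] [DecidableEq ι] {t : ι → Finset κ}

lemma expect_piFinset_prod (t : ι → Finset κ) (f : ι → κ → ℝ) :
    𝔼 x ∈ Fintype.piFinset t, ∏ i, f i (x i) = ∏ i, 𝔼 y ∈ t i, f i y := by
  simp only [expect_eq_sum_div_card, ← prod_univ_sum, Fintype.card_piFinset, Nat.cast_prod,
    prod_div_distrib]

lemma expect_piFinset_apply (ht : ∀ i, (t i).Nonempty) (i : ι) (g : κ → ℝ) :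
    𝔼 x ∈ Fintype.piFinset t, g (x i) = 𝔼 y ∈ t i, g y := by
  have hg (x : ι → κ) : g (x i) = ∏ l, if l = i then g (x l) else 1 := by simp
  simp_rw [hg]
  rw [expect_piFinset_prod t fun l y => if l = i then g y else 1, prod_eq_single i]
  · simp
  · intro l _ hl
    simp [hl, expect_const (ht l)]
  · simp

lemma expect_piFinset_mul_eq_zero {i j : ι} (hij : i ≠ j) {f g : κ → ℝ}
    (hf : 𝔼 y ∈ t i, f y = 0) :
    𝔼 x ∈ Fintype.piFinset t, f (x i) * g (x j) = 0 := by
  have hfg (x : ι → κ) : f (x i) * g (x j) =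
      ∏ l, (if l = i then f (x l) else 1) * (if l = j then g (x l) else 1) := by
    rw [prod_mul_distrib]
    simp
  simp_rw [hfg]
  rw [expect_piFinset_prod t fun l y => (if l = i then f y else 1) * (if l = j then g y else 1)]
  exact prod_eq_zero (mem_univ i) (by simpa [hij] using hf)

lemma expect_piFinset_sq_sum (ht : ∀ i, (t i).Nonempty) (D : ι → κ → ℝ)
    (hD : ∀ i, 𝔼 y ∈ t i, D i y = 0) :
    𝔼 x ∈ Fintype.piFinset t, (∑ i, D i (x i)) ^ 2 = ∑ i, 𝔼 y ∈ t i, D i y ^ 2 := by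
  simp_rw [sq, sum_mul_sum, expect_sum_comm]
  refine sum_congr rfl fun i _ => ?_
  rw [sum_eq_single i (fun j _ hji => expect_piFinset_mul_eq_zero hji.symm (hD i))
    (by simp)]
  exact expect_piFinset_apply ht i fun y => D i y * D i y

end Product

section FirstStage

variable {J m : ℕ} {Jc : Fin m → ℕ}

lemma mem_mechA {A : Fin J → Fin m} : A ∈ mechA J m Jc ↔ ∀ a, #{j | A j = a} = Jc a := by
  simp [mechA]

lemma mechA_nonempty (hJsum : ∑ a, Jc a = J) : (mechA J m Jc).Nonempty := by
  let e : Fin J ≃ Σ a, Fin (Jc a) := Fintype.equivOfCardEq (by simp [hJsum])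
  refine ⟨fun j => (e j).1, mem_mechA.2 fun a => ?_⟩
  rw [card_equiv e (t := {x | x.1 = a}) (by simp), ← Fintype.card_subtype,
    Fintype.card_congr (Equiv.sigmaSubtype a), Fintype.card_fin]

lemma comp_perm_mem_mechA (σ : Equiv.Perm (Fin J)) {A : Fin J → Fin m}
    (hA : A ∈ mechA J m Jc) : A ∘ σ ∈ mechA J m Jc :=
  mem_mechA.2 fun a => (card_equiv σ (by simp)).trans (mem_mechA.1 hA a)

lemma expect_mechA_indicator (hJsum : ∑ a, Jc a = J) (j : Fin J) (a : Fin m) :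
    𝔼 A ∈ mechA J m Jc, (if A j = a then 1 else 0 : ℝ) = Jc a / J := by
  have hsymm (j' : Fin J) :
      𝔼 A ∈ mechA J m Jc, (if A j' = a then 1 else 0 : ℝ) =
        𝔼 A ∈ mechA J m Jc, (if A j = a then 1 else 0 : ℝ) := by
    have hinv : ∀ A : Fin J → Fin m, A ∘ Equiv.swap j j' ∘ Equiv.swap j j' = A := by
      intro A; ext; simp
    exact expect_nbij' (· ∘ Equiv.swap j j') (· ∘ Equiv.swap j j')
      (fun A hA => comp_perm_mem_mechA _ hA) (fun A hA => comp_perm_mem_mechA _ hA)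
      (fun A _ => hinv A) (fun A _ => hinv A) (fun A _ => by simp)
  have hcount : ∀ A ∈ mechA J m Jc, ∑ j', (if A j' = a then 1 else 0 : ℝ) = Jc a := by
    intro A hA
    rw [sum_boole]
    exact_mod_cast mem_mechA.1 hA a
  have hJ : (J : ℝ) ≠ 0 := Nat.cast_ne_zero.2 j.pos.ne'
  rw [eq_div_iff hJ, mul_comm]
  calc (J : ℝ) * 𝔼 A ∈ mechA J m Jc, (if A j = a then 1 else 0 : ℝ)
      = ∑ j', 𝔼 A ∈ mechA J m Jc, (if A j' = a then 1 else 0 : ℝ) := by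
        simp [hsymm]
    _ = Jc a := by
        rw [← expect_sum_comm, expect_congr rfl hcount, expect_const (mechA_nonempty hJsum)]

lemma expect_mechA_apply (hJsum : ∑ a, Jc a = J) (j : Fin J) (f : Fin m → ℝ) :
    𝔼 A ∈ mechA J m Jc, f (A j) = ∑ a, Jc a / J * f a := by
  have hf (A : Fin J → Fin m) : f (A j) = ∑ a, f a * if A j = a then 1 else 0 := by simp
  simp_rw [hf, expect_sum_comm, ← mul_expect, expect_mechA_indicator hJsum, mul_comm]

end FirstStage

section Estimator

variable {J m N : ℕ} {k : Fin m → ℕ}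

lemma expec_eq_expect (Jc : Fin m → ℕ)
    (f : (Fin J → Fin m) → (Fin J → Finset (Fin N)) → ℝ) :
    expec J m N Jc k f = 𝔼 A ∈ mechA J m Jc, 𝔼 S ∈ treatA J m N k A, f A S := by
  simp only [expec, expect_eq_sum_div_card, sum_div, div_div]
  exact sum_congr rfl fun A _ => sum_congr rfl fun S _ => by rw [mul_comm]

lemma treatA_eq_piFinset (A : Fin J → Fin m) :
    treatA J m N k A = Fintype.piFinset fun j => powersetCard (k (A j)) univ := by
  ext S
  simp [treatA]

lemma Ybarj_eq_expect (Y : Fin J → Fin N → Bool → ℝ) (j : Fin J) (z : Bool) :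
    Ybarj J N Y j z = 𝔼 i, Y j i z := by
  rw [Ybarj, Fintype.expect_eq_sum_div_card, Fintype.card_fin]

lemma etaw_eq (Y : Fin J → Fin N → Bool → ℝ) (z : Bool) :
    etaw J N Y z = (∑ j, sumSqDev fun i => Y j i z) / (N * J - 1) := by
  simp only [etaw, sumSqDev, Ybarj_eq_expect]

lemma tauw_eq (Y : Fin J → Fin N → Bool → ℝ) :
    tauw J N Y = (∑ j, sumSqDev fun i => Y j i true - Y j i false) / (N * J - 1) := by
  simp only [tauw, sumSqDev, Ybarj_eq_expect, expect_sub_distrib]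

lemma hatYj_sub_hatYj (Y : Fin J → Fin N → Bool → ℝ) (S : Fin J → Finset (Fin N)) (j : Fin J) :
    hatYj J N Y S true j - hatYj J N Y S false j =
      diffInMeans (fun i => Y j i true) (fun i => Y j i false) (S j) := by
  have htrue : ({i | decide (i ∈ S j) = true} : Finset (Fin N)) = S j := by ext; simp
  have hfalse : ({i | decide (i ∈ S j) = false} : Finset (Fin N)) = (S j)ᶜ := by ext; simp
  rw [hatYj, hatYj, htrue, hfalse, diffInMeans]
  congr 2
  · exact sum_congr rfl fun i hi => by simp [hi]
  · exact sum_congr rfl fun i hi => by simp [mem_compl.1 hi]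

lemma ATEhat_eq (Y : Fin J → Fin N → Bool → ℝ) (S : Fin J → Finset (Fin N)) :
    ATEhat J N Y S =
      (∑ j, diffInMeans (fun i => Y j i true) (fun i => Y j i false) (S j)) / J := by
  simp only [ATEhat, hatYj_sub_hatYj]

lemma sum_diffInMeansVar (hN : 2 ≤ N) (Y : Fin J → Fin N → Bool → ℝ) (n : ℕ) :
    ∑ j, diffInMeansVar n (fun i => Y j i true) (fun i => Y j i false) =
      (N * J - 1) / (N - 1) *
        (etaw J N Y true / n + etaw J N Y false / (N - n) - tauw J N Y / N) := by
  have hNJ : (N : ℝ) * J - 1 ≠ 0 := by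
    rw [sub_ne_zero]
    have : N * J ≠ 1 := by rw [Ne, mul_eq_one]; omega
    exact_mod_cast this
  simp only [diffInMeansVar, Fintype.card_fin, etaw_eq, tauw_eq]
  rw [← sum_div, sum_sub_distrib, sum_add_distrib, ← sum_div, ← sum_div, ← sum_div]
  field_simp

lemma expect_treatA_ATEhat (hk0 : ∀ a, 0 < k a) (hkN : ∀ a, k a < N)
    (Y : Fin J → Fin N → Bool → ℝ) (A : Fin J → Fin m) :
    𝔼 S ∈ treatA J m N k A, ATEhat J N Y S =
      (∑ j, (Ybarj J N Y j true - Ybarj J N Y j false)) / J := by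
  have hne (j : Fin J) : (powersetCard (k (A j)) (univ : Finset (Fin N))).Nonempty :=
    powersetCard_nonempty.2 (by simpa using (hkN (A j)).le)
  simp_rw [ATEhat_eq, ← expect_div, expect_sum_comm, treatA_eq_piFinset]
  refine congrArg (· / _) (sum_congr rfl fun j _ => ?_)
  rw [expect_piFinset_apply hne j (diffInMeans _ _),
    expect_diffInMeans (hk0 _) (by simpa using hkN (A j)), Ybarj_eq_expect, Ybarj_eq_expect]

lemma expect_treatA_sq_ATEhat_sub (hk0 : ∀ a, 0 < k a) (hkN : ∀ a, k a < N)
    (Y : Fin J → Fin N → Bool → ℝ) (A : Fin J → Fin m) :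
    𝔼 S ∈ treatA J m N k A,
        (ATEhat J N Y S - (∑ j, (Ybarj J N Y j true - Ybarj J N Y j false)) / J) ^ 2 =
      (∑ j, diffInMeansVar (k (A j)) (fun i => Y j i true) (fun i => Y j i false)) / J ^ 2 := by
  have hne (j : Fin J) : (powersetCard (k (A j)) (univ : Finset (Fin N))).Nonempty :=
    powersetCard_nonempty.2 (by simpa using (hkN (A j)).le)
  set D : Fin J → Finset (Fin N) → ℝ := fun j T =>
    diffInMeans (fun i => Y j i true) (fun i => Y j i false) T -
      (𝔼 i, Y j i true - 𝔼 i, Y j i false)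
  have hD (j : Fin J) : 𝔼 T ∈ powersetCard (k (A j)) univ, D j T = 0 := by
    rw [expect_sub_distrib, expect_diffInMeans (hk0 _) (by simpa using hkN (A j)),
      expect_const (hne j), sub_self]
  have hcentre (S : Fin J → Finset (Fin N)) :
      ATEhat J N Y S - (∑ j, (Ybarj J N Y j true - Ybarj J N Y j false)) / J =
        (∑ j, D j (S j)) / J := by
    simp only [ATEhat_eq, Ybarj_eq_expect, D, sum_sub_distrib, sub_div]
  simp_rw [hcentre, div_pow, ← expect_div, treatA_eq_piFinset]
  rw [expect_piFinset_sq_sum hne D hD]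
  exact congrArg (· / _) (sum_congr rfl fun j _ =>
    expect_sq_diffInMeans_sub (hk0 _) (by simpa using hkN (A j)) _ _)

end Estimator

end TwoStageNoInterference

open TwoStageNoInterference

theorem var_ATEhat_two_stage_general (J m N : ℕ) (Jc : Fin m → ℕ) (k : Fin m → ℕ)
    (p : Fin m → ℝ) (Y : Fin J → Fin N → Bool → ℝ)
    (hN : 2 ≤ N)
    (hJsum : ∑ a, Jc a = J)
    (hk : ∀ a, (k a : ℝ) = (N : ℝ) * p a)
    (hk1 : ∀ a, 1 ≤ k a) (hk2 : ∀ a, k a ≤ N - 1) :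
    variance J m N Jc k (fun _ S => ATEhat J N Y S) =
      (((N : ℝ) * (J : ℝ) - 1) / ((J : ℝ) ^ 3 * ((N : ℝ) - 1))) *
        ((∑ a, ((Jc a : ℝ) / ((N : ℝ) * p a)) * etaw J N Y true) +
          (∑ a, ((Jc a : ℝ) / ((N : ℝ) * (1 - p a))) * etaw J N Y false) -
          ((J : ℝ) / (N : ℝ)) * tauw J N Y) := by
  have hkN : ∀ a, k a < N := fun a => by have := hk2 a; omega
  have hmean : expec J m N Jc k (fun _ S => ATEhat J N Y S) =
      (∑ j, (Ybarj J N Y j true - Ybarj J N Y j false)) / J := by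
    rw [expec_eq_expect, expect_congr rfl fun A _ => expect_treatA_ATEhat hk1 hkN Y A,
      expect_const (mechA_nonempty hJsum)]
  rw [variance, hmean, expec_eq_expect]
  simp_rw [expect_treatA_sq_ATEhat_sub hk1 hkN Y, ← expect_div, expect_sum_comm]
  have hJ : (J : ℝ) / N = ∑ a, (Jc a : ℝ) / N := by
    rw [← sum_div, ← Nat.cast_sum, hJsum]
  have hk' (a : Fin m) : (N : ℝ) * (1 - p a) = N - k a := by rw [hk]; ring
  rw [sum_congr rfl fun j _ => expect_mechA_apply hJsum j fun a => diffInMeansVar (k a) _ _,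
    sum_comm]
  simp_rw [← mul_sum, sum_diffInMeansVar hN, hJ]
  rw [sum_mul, ← sum_add_distrib, ← sum_sub_distrib, mul_sum, sum_div]
  refine sum_congr rfl fun a _ => ?_
  rw [← hk, hk', mul_comm ((J : ℝ) ^ 3), ← div_div]
  ring

/-- **Exact variance of the two-stage design estimator under no interference.** With
`J ≥ 2` clusters of common size `N ≥ 2`, `Jc a` clusters per mechanism, and `N·p_a`
(an integer between `1` and `N−1`) treated units per cluster under mechanism `a`, the
difference-in-means estimator has variance
`((NJ−1)/(J³(N−1))) [∑_a (J_a/(N p_a)) η_w²(1) + ∑_a (J_a/(N(1−p_a))) η_w²(0)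
 − (J/N) τ_w²]`. -/
theorem var_ATEhat_two_stage (J m N : ℕ) (Jc : Fin m → ℕ) (k : Fin m → ℕ)
    (p : Fin m → ℝ) (Y : Fin J → Fin N → Bool → ℝ)
    (hJ : 2 ≤ J) (hN : 2 ≤ N)
    (hJc : ∀ a, 1 ≤ Jc a) (hJsum : ∑ a, Jc a = J)
    (hp0 : ∀ a, 0 < p a) (hp1 : ∀ a, p a < 1)
    (hk : ∀ a, (k a : ℝ) = (N : ℝ) * p a)
    (hk1 : ∀ a, 1 ≤ k a) (hk2 : ∀ a, k a ≤ N - 1) :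
    variance J m N Jc k (fun _ S => ATEhat J N Y S) =
      (((N : ℝ) * (J : ℝ) - 1) / ((J : ℝ) ^ 3 * ((N : ℝ) - 1))) *
        ((∑ a, ((Jc a : ℝ) / ((N : ℝ) * p a)) * etaw J N Y true) +
          (∑ a, ((Jc a : ℝ) / ((N : ℝ) * (1 - p a))) * etaw J N Y false) -
          ((J : ℝ) / (N : ℝ)) * tauw J N Y) :=
  var_ATEhat_two_stage_general J m N Jc k p Y hN hJsum hk hk1 hk2
end
end
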